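/- Continuation criterion, density gradient controls the vorticity (implication (c) ⇒ (d)): Let (ω, ρ) be a classical solution of the model on [0,T) with flow map Φ, with initial data ω₀ = ω(·,0). Then for every t ∈ [0,T): ‖ω(·,t)‖_∞ ≤ ‖ω₀‖_∞ + ∫₀ᵗ ‖∂_x ρ(·,s)‖_∞ ds. (Here one uses that ρ(·,s) vanishes near 0, so that ρ(y,s) ≤ ‖∂_x ρ(·,s)‖_∞ · y for all y ∈ (0,1).) -/

import Mathlib

/-! Along a trajectory the vorticity equation reads
`d/ds ω(Φ(x,s),s) = ρ(Φ(x,s),s) / Φ(x,s)`. Because `ρ(·,s)` vanishes near `0`, the mean value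
theorem gives `ρ(y,s) ≤ ‖∂ₓρ(·,s)‖_∞ · y`, so this rate is at most `‖∂ₓρ(·,s)‖_∞`. Integrating
in time bounds `ω(Φ(x,t),t)` by `ω(x,0) + ∫₀ᵗ ‖∂ₓρ(·,s)‖_∞ ds`, and `Φ(·,t)` maps `(0,1)` onto
itself. -/

open MeasureTheory

/-- The Biot–Savart velocity of the model:
`u(x,t) = x·∫_{min(β₂x,1)}^{min(β₁x,1)} ω(y,t)/y dy − x·∫_{min(β₁x,1)}^{1} ω(y,t)/y dy`. -/
noncomputable def vel (β₁ β₂ : ℝ) (ω : ℝ → ℝ → ℝ) (x t : ℝ) : ℝ :=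
  x * (∫ y in (min (β₂ * x) 1)..(min (β₁ * x) 1), ω y t / y)
    - x * ∫ y in (min (β₁ * x) 1)..(1:ℝ), ω y t / y

/-- A classical solution of the model on `(0,1) × [0,T)`, together with its flow map `Φ`. -/
structure IsClassicalSolution (β₁ β₂ T : ℝ) (ω ρ Φ : ℝ → ℝ → ℝ) : Prop where
  Tpos : 0 < T
  omega_smooth : ContDiffOn ℝ 1 (fun p : ℝ × ℝ => ω p.1 p.2) (Set.Ioo 0 1 ×ˢ Set.Ico 0 T)
  rho_smooth : ContDiffOn ℝ 1 (fun p : ℝ × ℝ => ρ p.1 p.2) (Set.Ioo 0 1 ×ˢ Set.Ico 0 T)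
  omega_nonneg : ∀ x t, 0 ≤ ω x t
  rho_nonneg : ∀ x t, 0 ≤ ρ x t
  supp : ∀ t, 0 ≤ t → t < T → ∃ a b : ℝ, 0 < a ∧ a ≤ b ∧ b < 1 ∧
      ∀ x, x ∉ Set.Icc a b → ω x t = 0 ∧ ρ x t = 0
  omega_eq : ∀ x ∈ Set.Ioo (0:ℝ) 1, ∀ t, 0 ≤ t → t < T →
      derivWithin (fun s => ω x s) (Set.Ico 0 T) t
        + vel β₁ β₂ ω x t * deriv (fun y => ω y t) x = ρ x t / x
  rho_eq : ∀ x ∈ Set.Ioo (0:ℝ) 1, ∀ t, 0 ≤ t → t < T →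
      derivWithin (fun s => ρ x s) (Set.Ico 0 T) t
        + vel β₁ β₂ ω x t * deriv (fun y => ρ y t) x = 0
  flow_init : ∀ x ∈ Set.Ioo (0:ℝ) 1, Φ x 0 = x
  flow_deriv : ∀ x ∈ Set.Ioo (0:ℝ) 1, ∀ t, 0 ≤ t → t < T →
      HasDerivWithinAt (fun s => Φ x s) (vel β₁ β₂ ω (Φ x t) t) (Set.Ico 0 T) t
  flow_mono : ∀ t, 0 ≤ t → t < T → StrictMonoOn (fun x => Φ x t) (Set.Ioo 0 1)
  flow_bij : ∀ t, 0 ≤ t → t < T → Set.BijOn (fun x => Φ x t) (Set.Ioo 0 1) (Set.Ioo 0 1)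

/-- Supremum norm over `(0,1)`. -/
noncomputable def supSlice (f : ℝ → ℝ) : ℝ := sSup ((fun x => |f x|) '' Set.Ioo 0 1)

open Set Filter Topology

section PartialDerivatives

variable {F : ℝ → ℝ → ℝ} {U V : Set ℝ} {x s : ℝ} {L : ℝ × ℝ →L[ℝ] ℝ}

theorem hasDerivAt_left_of_hasFDerivWithinAt
    (hF : HasFDerivWithinAt (Function.uncurry F) L (U ×ˢ V) (x, s)) (hU : U ∈ 𝓝 x)
    (hs : s ∈ V) : HasDerivAt (fun y => F y s) (L (1, 0)) x := by
  have hslice : HasDerivWithinAt (fun y => (y, s)) ((1 : ℝ), (0 : ℝ)) U x :=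
    ((hasDerivAt_id x).prodMk (hasDerivAt_const x s)).hasDerivWithinAt
  exact (hF.comp_hasDerivWithinAt (f := fun y => (y, s)) x hslice fun _ hy => ⟨hy, hs⟩).hasDerivAt
    hU

theorem hasDerivWithinAt_right_of_hasFDerivWithinAt
    (hF : HasFDerivWithinAt (Function.uncurry F) L (U ×ˢ V) (x, s)) (hx : x ∈ U) :
    HasDerivWithinAt (fun r => F x r) (L (0, 1)) V s := by
  have hslice : HasDerivWithinAt (fun r => (x, r)) ((0 : ℝ), (1 : ℝ)) V s :=
    ((hasDerivAt_const s x).prodMk (hasDerivAt_id s)).hasDerivWithinAt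
  exact hF.comp_hasDerivWithinAt (f := fun r => (x, r)) s hslice fun _ hr => ⟨hx, hr⟩

theorem hasDerivWithinAt_comp_graph {γ : ℝ → ℝ} {v : ℝ}
    (hF : DifferentiableWithinAt ℝ (Function.uncurry F) (U ×ˢ V) (γ s, s))
    (hU : U ∈ 𝓝 (γ s)) (hγ : HasDerivWithinAt γ v V s) (hγU : MapsTo γ V U) (hs : s ∈ V)
    (hV : UniqueDiffWithinAt ℝ V s) :
    HasDerivWithinAt (fun r => F (γ r) r)
      (derivWithin (fun r => F (γ s) r) V s + v * deriv (fun y => F y s) (γ s)) V s := by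
  have hL := hF.hasFDerivWithinAt
  set L := fderivWithin ℝ (Function.uncurry F) (U ×ˢ V) (γ s, s)
  have hspace : deriv (fun y => F y s) (γ s) = L (1, 0) :=
    (hasDerivAt_left_of_hasFDerivWithinAt hL hU hs).deriv
  have htime : derivWithin (fun r => F (γ s) r) V s = L (0, 1) :=
    (hasDerivWithinAt_right_of_hasFDerivWithinAt hL (mem_of_mem_nhds hU)).derivWithin hV
  have hsplit : L (v, 1) = L (0, 1) + v * L (1, 0) := by
    rw [show ((v, 1) : ℝ × ℝ) = (0, 1) + v • (1, 0) by simp, map_add, map_smul, smul_eq_mul]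
  have hgraph : HasDerivWithinAt (fun r => (γ r, r)) (v, (1 : ℝ)) V s :=
    hγ.prodMk (hasDerivWithinAt_id s V)
  rw [hspace, htime, ← hsplit]
  exact hL.comp_hasDerivWithinAt (f := fun r => (γ r, r)) s hgraph fun r hr => ⟨hγU hr, hr⟩

theorem ContDiffOn.continuousOn_deriv_left
    (hF : ContDiffOn ℝ 1 (Function.uncurry F) (U ×ˢ V)) (hU : IsOpen U) (hV : UniqueDiffOn ℝ V)
    (hs : s ∈ V) : ContinuousOn (fun x => deriv (fun y => F y s) x) U := by
  have hslice : ContinuousOn (fun x : ℝ => (x, s)) U :=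
    (continuous_id.prodMk continuous_const).continuousOn
  have hfderiv := (hF.continuousOn_fderivWithin (hU.uniqueDiffOn.prod hV) le_rfl).comp hslice
    fun x hx => ⟨hx, hs⟩
  have hconst : ContinuousOn (fun _ : ℝ => ((1 : ℝ), (0 : ℝ))) U := continuousOn_const
  refine (hfderiv.clm_apply hconst).congr fun x hx => ?_
  exact (hasDerivAt_left_of_hasFDerivWithinAt
    ((hF.differentiableOn one_ne_zero _ ⟨hx, hs⟩).hasFDerivWithinAt) (hU.mem_nhds hx) hs).deriv

end PartialDerivatives

theorem bddAbove_abs_image_of_continuousOn_Icc {f : ℝ → ℝ} {a b : ℝ}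
    (hf : ContinuousOn f (Icc a b)) (h0 : ∀ x ∉ Icc a b, f x = 0) (S : Set ℝ) :
    BddAbove ((fun x => |f x|) '' S) := by
  obtain ⟨C, hC⟩ := isCompact_Icc.exists_bound_of_continuousOn hf
  refine ⟨max C 0, ?_⟩
  rintro _ ⟨x, -, rfl⟩
  by_cases hx : x ∈ Icc a b
  · exact le_max_of_le_left (hC x hx)
  · simp [h0 x hx]

theorem abs_le_supSlice {f : ℝ → ℝ} (hf : BddAbove ((fun x => |f x|) '' Ioo 0 1))
    {x : ℝ} (hx : x ∈ Ioo (0 : ℝ) 1) : |f x| ≤ supSlice f :=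
  le_csSup hf ⟨x, hx, rfl⟩

theorem le_mul_of_abs_deriv_le_of_eqOn_zero {f : ℝ → ℝ} {M a c y : ℝ}
    (hf : ∀ x ∈ Ioo 0 c, DifferentiableAt ℝ f x) (hM : ∀ x ∈ Ioo 0 c, |deriv f x| ≤ M)
    (ha : 0 < a) (h0 : EqOn f 0 (Ioo 0 a)) (hy : y ∈ Ioo 0 c) : f y ≤ M * y := by
  set z := min a y / 2
  have hz_pos : 0 < z := half_pos (lt_min ha hy.1)
  have hz_lt : z < min a y := half_lt_self (lt_min ha hy.1)
  have hzc : z ∈ Ioo 0 c := ⟨hz_pos, hz_lt.trans_le (min_le_right a y) |>.trans hy.2⟩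
  have hfz : f z = 0 := h0 ⟨hz_pos, hz_lt.trans_le (min_le_left a y)⟩
  have hmvt := (convex_Ioo 0 c).norm_image_sub_le_of_norm_deriv_le hf hM hzc hy
  have hM0 : 0 ≤ M := (abs_nonneg _).trans (hM y hy)
  rw [Real.norm_eq_abs, Real.norm_eq_abs, hfz, sub_zero] at hmvt
  have hyz : |y - z| ≤ y := by
    rw [abs_of_pos (by linarith [min_le_right a y])]; linarith
  calc f y ≤ |f y| := le_abs_self _
    _ ≤ M * |y - z| := hmvt
    _ ≤ M * y := mul_le_mul_of_nonneg_left hyz hM0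

namespace IsClassicalSolution

variable {β₁ β₂ T : ℝ} {ω ρ Φ : ℝ → ℝ → ℝ} {x y s t : ℝ}

theorem flow_mem (hsol : IsClassicalSolution β₁ β₂ T ω ρ Φ) (hx : x ∈ Ioo (0 : ℝ) 1)
    (hs : s ∈ Ico 0 T) : Φ x s ∈ Ioo (0 : ℝ) 1 :=
  (hsol.flow_bij s hs.1 hs.2).mapsTo hx

theorem hasDerivWithinAt_omega_flow (hsol : IsClassicalSolution β₁ β₂ T ω ρ Φ)
    (hx : x ∈ Ioo (0 : ℝ) 1) (hs : s ∈ Ico 0 T) :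
    HasDerivWithinAt (fun r => ω (Φ x r) r) (ρ (Φ x s) s / Φ x s) (Ico 0 T) s := by
  have hΦ := hsol.flow_mem hx hs
  rw [← hsol.omega_eq (Φ x s) hΦ s hs.1 hs.2]
  exact hasDerivWithinAt_comp_graph
    (hsol.omega_smooth.differentiableOn one_ne_zero _ ⟨hΦ, hs⟩) (isOpen_Ioo.mem_nhds hΦ)
    (hsol.flow_deriv x hx s hs.1 hs.2) (fun _ hr => hsol.flow_mem hx hr) hs
    (uniqueDiffOn_Ico 0 T s hs)

theorem bddAbove_abs_omega (hsol : IsClassicalSolution β₁ β₂ T ω ρ Φ) (hs : s ∈ Ico 0 T) :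
    BddAbove ((fun x => |ω x s|) '' Ioo 0 1) := by
  obtain ⟨a, b, ha, -, hb, hsupp⟩ := hsol.supp s hs.1 hs.2
  have hslice : ContinuousOn (fun x : ℝ => (x, s)) (Icc a b) :=
    (continuous_id.prodMk continuous_const).continuousOn
  exact bddAbove_abs_image_of_continuousOn_Icc
    (hsol.omega_smooth.continuousOn.comp hslice fun _ hx => ⟨Icc_subset_Ioo ha hb hx, hs⟩)
    (fun x hx => (hsupp x hx).1) _

theorem bddAbove_abs_deriv_rho (hsol : IsClassicalSolution β₁ β₂ T ω ρ Φ) (hs : s ∈ Ico 0 T) :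
    BddAbove ((fun x => |deriv (fun y => ρ y s) x|) '' Ioo 0 1) := by
  obtain ⟨a, b, ha, -, hb, hsupp⟩ := hsol.supp s hs.1 hs.2
  refine bddAbove_abs_image_of_continuousOn_Icc
    ((hsol.rho_smooth.continuousOn_deriv_left isOpen_Ioo (uniqueDiffOn_Ico 0 T) hs).mono
      (Icc_subset_Ioo ha hb)) (fun x hx => ?_) _
  have hzero : (fun y => ρ y s) =ᶠ[𝓝 x] fun _ => 0 :=
    eventually_of_mem (isClosed_Icc.isOpen_compl.mem_nhds hx) fun y hy => (hsupp y hy).2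
  rw [hzero.deriv_eq, deriv_const]

theorem rho_le_supSlice_deriv_mul (hsol : IsClassicalSolution β₁ β₂ T ω ρ Φ)
    (hy : y ∈ Ioo (0 : ℝ) 1) (hs : s ∈ Ico 0 T) :
    ρ y s ≤ supSlice (fun x => deriv (fun z => ρ z s) x) * y := by
  obtain ⟨a, _, ha, -, -, hsupp⟩ := hsol.supp s hs.1 hs.2
  refine le_mul_of_abs_deriv_le_of_eqOn_zero (fun x hx => ?_)
    (fun x hx => abs_le_supSlice (hsol.bddAbove_abs_deriv_rho hs) hx) ha
    (fun x hx => (hsupp x fun h => hx.2.not_ge h.1).2) hy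
  exact (hasDerivAt_left_of_hasFDerivWithinAt
    (hsol.rho_smooth.differentiableOn one_ne_zero _ ⟨hx, hs⟩).hasFDerivWithinAt
    (isOpen_Ioo.mem_nhds hx) hs).differentiableAt

theorem omega_flow_le (hsol : IsClassicalSolution β₁ β₂ T ω ρ Φ)
    (hint : IntervalIntegrable (fun s => supSlice (fun z => deriv (fun y => ρ y s) z))
      volume 0 t)
    (hx : x ∈ Ioo (0 : ℝ) 1) (ht : 0 ≤ t) (htT : t < T) :
    ω (Φ x t) t ≤
      ω x 0 + ∫ s in (0 : ℝ)..t, supSlice (fun z => deriv (fun y => ρ y s) z) := by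
  have hsub : Icc 0 t ⊆ Ico 0 T := Icc_subset_Ico_right htT
  have hderiv (s : ℝ) (hs : s ∈ Ico 0 T) := hsol.hasDerivWithinAt_omega_flow hx hs
  have hright (s : ℝ) (hs : s ∈ Ico 0 t) : Ico 0 T ∈ 𝓝[>] s :=
    mem_of_superset (Ioo_mem_nhdsGT (hs.2.trans htT))
      (Ioo_subset_Ico_self.trans (Ico_subset_Ico_left hs.1))
  have hrate (s : ℝ) (hs : s ∈ Ico 0 t) :
      ρ (Φ x s) s / Φ x s ≤ supSlice (fun z => deriv (fun y => ρ y s) z) := by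
    have hsT : s ∈ Ico 0 T := ⟨hs.1, hs.2.trans htT⟩
    exact (div_le_iff₀ (hsol.flow_mem hx hsT).1).2
      (hsol.rho_le_supSlice_deriv_mul (hsol.flow_mem hx hsT) hsT)
  have hftc := intervalIntegral.sub_le_integral_of_hasDeriv_right_of_le_Ico ht
    (fun s hs => ((hderiv s (hsub hs)).mono hsub).continuousWithinAt)
    (fun s hs => (hderiv s ⟨hs.1, hs.2.trans htT⟩).mono_of_mem_nhdsWithin (hright s hs))
    ((intervalIntegrable_iff_integrableOn_Icc_of_le ht).1 hint) hrate
  rw [hsol.flow_init x hx] at hftc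
  linarith

end IsClassicalSolution

theorem grad_rho_controls_omega (β₁ β₂ T : ℝ)
    (ω ρ Φ : ℝ → ℝ → ℝ) (hsol : IsClassicalSolution β₁ β₂ T ω ρ Φ)
    (hint : ∀ t, 0 ≤ t → t < T →
      IntervalIntegrable (fun s => supSlice (fun x => deriv (fun y => ρ y s) x))
        MeasureTheory.volume 0 t) :
    ∀ t, 0 ≤ t → t < T →
      supSlice (fun x => ω x t)
        ≤ supSlice (fun x => ω x 0)
            + ∫ s in (0:ℝ)..t, supSlice (fun x => deriv (fun y => ρ y s) x) := by
  intro t ht htT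
  refine csSup_le ⟨_, 1 / 2, by norm_num, rfl⟩ ?_
  rintro _ ⟨y, hy, rfl⟩
  obtain ⟨x, hx, rfl⟩ := (hsol.flow_bij t ht htT).surjOn hy
  have hinit : ω x 0 ≤ supSlice (fun x => ω x 0) :=
    (le_abs_self _).trans (abs_le_supSlice (hsol.bddAbove_abs_omega ⟨le_rfl, hsol.Tpos⟩) hx)
  show |ω (Φ x t) t| ≤ _
  rw [abs_of_nonneg (hsol.omega_nonneg _ _)]
  linarith [hsol.omega_flow_le (hint t ht htT) hx ht htT]
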